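/- arXiv:2501.03852 — 2 statements merged into one kernel-verified Lean document; each statement's English description precedes it below -/
import Mathlib

section
/- Let p be a prime, X = (V, E, s, t) a finite connected directed multigraph with V nonempty, and a ∈ ℤ_p^× a p-adic unit. Then the derived graphs X(ℤ/p^nℤ, α_n), where α_n is the constant voltage assignment with value a mod p^n, are connected for all n ≥ 1 if and only if X admits a closed walk whose weight is coprime to p. -/
/-!
Lifting walks of `X` to the derived graph `X(G, c)` of a constant voltage `c` shows that `(u, σ)`
and `(w, τ)` are connected exactly when some walk from `u` to `w` has weight `k` with
`τ = σ + k • c`. For connected `X` the derived graph is therefore connected iff the multiples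
`k • c` of closed-walk weights `k` at one vertex exhaust `G`. In `ℤ/pⁿℤ` with `c` a unit, a
closed-walk weight prime to `p` is invertible, so its multiples exhaust the group; conversely,
already for `n = 1` reaching `1` needs a weight prime to `p`.
-/

/-- A directed multigraph: a vertex type `V`, an edge type `E`, and source/target maps. -/
structure DirMultigraph (V E : Type*) where
  s : E → V
  t : E → V

/-- The adjacency relation: there is an edge with source `x` and target `y`. -/
def DirMultigraph.Adj {V E : Type*} (X : DirMultigraph V E) (x y : V) : Prop :=
  ∃ e, X.s e = x ∧ X.t e = y

/-- A directed multigraph is connected if any two vertices are related by the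
reflexive-transitive-symmetric closure of the adjacency relation. -/
def DirMultigraph.Connected {V E : Type*} (X : DirMultigraph V E) : Prop :=
  ∀ x y : V, Relation.EqvGen X.Adj x y

/-- The derived graph `X(G, α)` of a voltage assignment `α : E → G`: vertices `V × G`,
edges `E × G`, where the edge `(e, σ)` goes from `(s e, σ)` to `(t e, σ + α e)`. -/
def DirMultigraph.derived {V E G : Type*} [AddCommGroup G]
    (X : DirMultigraph V E) (α : E → G) : DirMultigraph (V × G) (E × G) where
  s := fun q => (X.s q.1, q.2)
  t := fun q => (X.t q.1, q.2 + α q.1)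

/-- `WalkW X u v k` holds if there is a walk from `u` to `v` in which edges may be traversed
forwards or backwards, of weight `k` = (number of forwards steps) − (number of backwards
steps). -/
inductive DirMultigraph.WalkW {V E : Type*} (X : DirMultigraph V E) : V → V → ℤ → Prop
  | nil (v : V) : WalkW X v v 0
  | fwd {u v w : V} {k : ℤ} (e : E) (h : WalkW X u v k) (hs : X.s e = v) (ht : X.t e = w) :
      WalkW X u w (k + 1)
  | bwd {u v w : V} {k : ℤ} (e : E) (h : WalkW X u v k) (ht : X.t e = v) (hs : X.s e = w) :
      WalkW X u w (k - 1)

namespace DirMultigraph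

variable {V E : Type*} {X : DirMultigraph V E}

namespace WalkW

theorem trans {u v w : V} {k l : ℤ} (h₁ : X.WalkW u v k) (h₂ : X.WalkW v w l) :
    X.WalkW u w (k + l) := by
  induction h₂ with
  | nil => simpa using h₁
  | fwd e _ hs ht ih => simpa [add_assoc] using ih.fwd e hs ht
  | bwd e _ ht hs ih => simpa [add_sub_assoc] using ih.bwd e ht hs

theorem symm {u v : V} {k : ℤ} (h : X.WalkW u v k) : X.WalkW v u (-k) := by
  induction h with
  | nil => simpa using nil _
  | fwd e _ hs ht ih =>
    convert ((nil _).bwd e ht hs).trans ih using 1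
    ring
  | bwd e _ ht hs ih =>
    convert ((nil _).fwd e hs ht).trans ih using 1
    ring

theorem mul_left {v : V} {k : ℤ} (h : X.WalkW v v k) (j : ℤ) : X.WalkW v v (j * k) := by
  induction j using Int.induction_on with
  | zero => simpa using nil v
  | succ i ih => simpa [add_mul] using ih.trans h
  | pred i ih =>
    convert ih.trans h.symm using 1
    ring

theorem eqvGen {u v : V} {k : ℤ} (h : X.WalkW u v k) : Relation.EqvGen X.Adj u v := by
  induction h with
  | nil => exact .refl _
  | fwd e _ hs ht ih => exact ih.trans _ _ _ (.rel _ _ ⟨e, hs, ht⟩)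
  | bwd e _ ht hs ih => exact ih.trans _ _ _ (.symm _ _ (.rel _ _ ⟨e, hs, ht⟩))

theorem of_eqvGen {u v : V} (h : Relation.EqvGen X.Adj u v) : ∃ k, X.WalkW u v k := by
  induction h with
  | rel x y hxy =>
    obtain ⟨e, hs, ht⟩ := hxy
    exact ⟨_, (nil x).fwd e hs ht⟩
  | refl x => exact ⟨0, nil x⟩
  | symm x y _ ih =>
    obtain ⟨k, hk⟩ := ih
    exact ⟨-k, hk.symm⟩
  | trans x y z _ _ ih₁ ih₂ =>
    obtain ⟨k, hk⟩ := ih₁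
    obtain ⟨l, hl⟩ := ih₂
    exact ⟨k + l, hk.trans hl⟩

theorem derived_const {G : Type*} [AddCommGroup G] (c : G) {u v : V} {k : ℤ}
    (h : X.WalkW u v k) (σ : G) :
    (X.derived fun _ => c).WalkW (u, σ) (v, σ + k • c) k := by
  induction h with
  | nil => simpa using nil _
  | @fwd _ _ k e _ hs ht ih =>
    rw [add_smul, one_smul, ← add_assoc]
    exact ih.fwd (e, σ + k • c) (by simp [derived, hs]) (by simp [derived, ht])
  | @bwd v _ k e _ ht hs ih =>
    have ht' : (X.derived fun _ => c).t (e, σ + (k - 1) • c) = (v, σ + k • c) := by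
      simp only [derived, ht, sub_smul, one_smul, sub_add_cancel, add_sub_assoc']
    exact ih.bwd (e, σ + (k - 1) • c) ht' (by simp [derived, hs])

end WalkW

theorem eqvGen_derived_const_iff {G : Type*} [AddCommGroup G] (c : G) {x y : V × G} :
    Relation.EqvGen (X.derived fun _ => c).Adj x y ↔
      ∃ k : ℤ, X.WalkW x.1 y.1 k ∧ y.2 = x.2 + k • c := by
  refine ⟨fun h => ?_, fun ⟨k, hk, hy⟩ => ?_⟩
  · induction h with
    | rel x y hxy =>
      obtain ⟨⟨e, σ⟩, hs, ht⟩ := hxy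
      simp only [derived, Prod.ext_iff] at hs ht
      refine ⟨_, (WalkW.nil _).fwd e hs.1 ht.1, ?_⟩
      rw [← ht.2, ← hs.2, zero_add, one_smul]
    | refl x => exact ⟨0, .nil _, by simp⟩
    | symm x y _ ih =>
      obtain ⟨k, hk, hy⟩ := ih
      exact ⟨-k, hk.symm, by rw [hy, neg_smul, add_neg_cancel_right]⟩
    | trans x y z _ _ ih₁ ih₂ =>
      obtain ⟨k, hk, hy⟩ := ih₁
      obtain ⟨l, hl, hz⟩ := ih₂
      exact ⟨k + l, hk.trans hl, by rw [hz, hy, add_smul, add_assoc]⟩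
  · obtain ⟨⟨u, σ⟩, ⟨w, τ⟩⟩ := x, y
    dsimp only at hk hy
    subst hy
    exact (hk.derived_const c σ).eqvGen

theorem derived_const_connected_iff {G : Type*} [AddCommGroup G] (hX : X.Connected) (c : G)
    (v : V) :
    (X.derived fun _ => c).Connected ↔ ∀ g : G, ∃ k : ℤ, X.WalkW v v k ∧ k • c = g := by
  refine ⟨fun h g => ?_, fun h ⟨u, σ⟩ ⟨w, τ⟩ => ?_⟩
  · obtain ⟨k, hk, hg⟩ := (eqvGen_derived_const_iff c).mp (h (v, 0) (v, g))
    exact ⟨k, hk, by simpa using hg.symm⟩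
  · obtain ⟨m₁, hm₁⟩ := WalkW.of_eqvGen (hX u v)
    obtain ⟨m₂, hm₂⟩ := WalkW.of_eqvGen (hX v w)
    obtain ⟨k, hk, hkc⟩ := h (τ - σ - (m₁ + m₂) • c)
    refine (eqvGen_derived_const_iff c).mpr ⟨m₁ + k + m₂, (hm₁.trans hk).trans hm₂, ?_⟩
    dsimp only
    rw [add_smul, add_smul, hkc, add_smul]
    abel

end DirMultigraph

theorem isUnit_intCast_zmod_prime_pow {p : ℕ} (hp : p.Prime) (n : ℕ) {k : ℤ}
    (hk : ¬(p : ℤ) ∣ k) : IsUnit (k : ZMod (p ^ n)) := by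
  rw [ZMod.coe_int_isUnit_iff_isCoprime, Nat.cast_pow]
  exact ((Prime.coprime_iff_not_dvd (Nat.prime_iff_prime_int.mp hp)).mpr hk).pow_left

open DirMultigraph in
theorem derived_connected_iff_exists_closed_walk_general {p : ℕ} [Fact p.Prime] {V E : Type*}
    [Nonempty V] (X : DirMultigraph V E) (hX : X.Connected)
    (a : ℤ_[p]) (ha : IsUnit a) :
    (∀ n : ℕ, 1 ≤ n → (X.derived (fun _ : E => PadicInt.toZModPow n a)).Connected) ↔
      ∃ (v : V) (k : ℤ), X.WalkW v v k ∧ ¬ ((p : ℤ) ∣ k) := by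
  have hp : p.Prime := Fact.out
  constructor
  · intro h
    obtain ⟨v⟩ := ‹Nonempty V›
    have : Fact (1 < p ^ 1) := ⟨by simpa using hp.one_lt⟩
    obtain ⟨k, hk, hk1⟩ := (derived_const_connected_iff hX _ v).mp (h 1 le_rfl) 1
    refine ⟨v, k, hk, fun hdvd => ?_⟩
    have hk0 : (k : ZMod (p ^ 1)) = 0 := by simpa [ZMod.intCast_zmod_eq_zero_iff_dvd] using hdvd
    rw [zsmul_eq_mul, hk0, zero_mul] at hk1
    exact zero_ne_one hk1
  · rintro ⟨v, k, hk, hkp⟩ n -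
    refine (derived_const_connected_iff hX _ v).mpr fun g => ?_
    obtain ⟨b, hb⟩ :=
      ((isUnit_intCast_zmod_prime_pow hp n hkp).mul (ha.map (PadicInt.toZModPow n))).exists_left_inv
    obtain ⟨j, hj⟩ := ZMod.intCast_surjective (g * b)
    refine ⟨j * k, hk.mul_left j, ?_⟩
    rw [zsmul_eq_mul, Int.cast_mul, hj, mul_assoc, mul_assoc, hb, mul_one]

/-- Let `X` be a finite connected directed multigraph and `a ∈ ℤ_p^×` a `p`-adic unit. The
derived graphs `X(ℤ/pⁿℤ, αₙ)` of the constant voltage assignments `αₙ` with value `a mod pⁿ`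
are connected for all `n ≥ 1` if and only if `X` admits a closed walk whose weight is coprime
to `p`. -/
theorem derived_connected_iff_exists_closed_walk {p : ℕ} [Fact p.Prime] {V E : Type*}
    [Fintype V] [Fintype E] [Nonempty V] (X : DirMultigraph V E) (hX : X.Connected)
    (a : ℤ_[p]) (ha : IsUnit a) :
    (∀ n : ℕ, 1 ≤ n → (X.derived (fun _ : E => PadicInt.toZModPow n a)).Connected) ↔
      ∃ (v : V) (k : ℤ), X.WalkW v v k ∧ ¬ ((p : ℤ) ∣ k) :=
  derived_connected_iff_exists_closed_walk_general X hX a ha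
end

section
/- Let p be a prime, n ≥ 1, and A an n×n matrix with natural number entries such that p divides Σ_j A_{ij} and p divides Σ_j A_{ji} for every index i (i.e., p divides the out-degree and the in-degree of every vertex of the associated directed multigraph). Let D be the diagonal matrix with D_{ii} = (Σ_j A_{ji}) + (Σ_j A_{ij}) and M(T) = det(D − (1+T)·A − (1+T)^{−1}·Aᵀ) ∈ ℤ_p[[T]]. Then every coefficient of M(T) is divisible by p, i.e., M(T) ∈ p·ℤ_p[[T]]. -/
/-! The determinant of a matrix vanishes modulo `c` as soon as `c` divides every row sum, because
`adj M * M = det M • 1` turns `det M` into a combination of the row sums. The row sums of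
`D − x A − y Aᵀ` are `d_o + d_i − x d_o − y d_i`, which `p` divides when it divides all degrees. -/

open PowerSeries

/-- The power series `M(T) = det(D − (1+T)·A − (1+T)⁻¹·Aᵀ)` attached to a directed multigraph
with adjacency matrix `A`, where `D` is the diagonal matrix of total degrees and `S` denotes
the inverse of `1 + T` in `ℤ_p[[T]]`. -/
noncomputable def Mser (p : ℕ) [Fact p.Prime] {n : ℕ} (A : Matrix (Fin n) (Fin n) ℕ)
    (S : PowerSeries ℤ_[p]) : PowerSeries ℤ_[p] :=
  (Matrix.of fun i j =>
      Matrix.diagonal (fun i => (((∑ j, A i j) + (∑ j, A j i) : ℕ) : PowerSeries ℤ_[p])) i j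
        - (1 + PowerSeries.X) * ((A i j : ℕ) : PowerSeries ℤ_[p])
        - S * ((A j i : ℕ) : PowerSeries ℤ_[p])).det

namespace Matrix

variable {ι R : Type*} [Fintype ι] [CommRing R]

theorem dvd_det_of_forall_dvd_sum_row [DecidableEq ι] [Nonempty ι] {M : Matrix ι ι R} {c : R}
    (h : ∀ i, c ∣ ∑ j, M i j) : c ∣ M.det := by
  obtain ⟨i⟩ := ‹Nonempty ι›
  have hdet : ((M.adjugate * M) *ᵥ fun _ => 1) i = M.det := by
    simp [adjugate_mul, smul_mulVec, one_mulVec]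
  have hrow : ∀ j, c ∣ (M *ᵥ fun _ => 1) j := by simpa [mulVec, dotProduct] using h
  rw [← hdet, ← mulVec_mulVec]
  exact Finset.dvd_sum fun j _ => (hrow j).mul_left _

def twistedLaplacian [DecidableEq ι] (A : Matrix ι ι ℕ) (x y : R) : Matrix ι ι R :=
  of fun i j => diagonal (fun i => (((∑ j, A i j) + (∑ j, A j i) : ℕ) : R)) i j
    - x * (A i j : R) - y * (A j i : R)

theorem sum_twistedLaplacian_row [DecidableEq ι] (A : Matrix ι ι ℕ) (x y : R) (i : ι) :
    ∑ j, twistedLaplacian A x y i j =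
      ((∑ j, A i j : ℕ) : R) + ((∑ j, A j i : ℕ) : R)
        - x * ((∑ j, A i j : ℕ) : R) - y * ((∑ j, A j i : ℕ) : R) := by
  simp only [twistedLaplacian, of_apply, Finset.sum_sub_distrib, diagonal_apply,
    Finset.sum_ite_eq, Finset.mem_univ, if_true, ← Finset.mul_sum, Nat.cast_add, Nat.cast_sum]

theorem natCast_dvd_sum_twistedLaplacian_row [DecidableEq ι] {A : Matrix ι ι ℕ} {c : ℕ}
    (hout : ∀ i, c ∣ ∑ j, A i j) (hin : ∀ i, c ∣ ∑ j, A j i) (x y : R) (i : ι) :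
    (c : R) ∣ ∑ j, twistedLaplacian A x y i j := by
  have hout' : (c : R) ∣ ((∑ j, A i j : ℕ) : R) := Nat.cast_dvd_cast (hout i)
  have hin' : (c : R) ∣ ((∑ j, A j i : ℕ) : R) := Nat.cast_dvd_cast (hin i)
  rw [sum_twistedLaplacian_row]
  exact ((hout'.add hin').sub (hout'.mul_left x)).sub (hin'.mul_left y)

end Matrix

theorem Mser_eq_det_twistedLaplacian (p : ℕ) [Fact p.Prime] {n : ℕ}
    (A : Matrix (Fin n) (Fin n) ℕ) (S : PowerSeries ℤ_[p]) :
    Mser p A S = (Matrix.twistedLaplacian A (1 + X) S).det :=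
  rfl

theorem Mser_dvd_of_p_dvd_degrees_general (p : ℕ) [Fact p.Prime] (n : ℕ) (hn : 1 ≤ n)
    (A : Matrix (Fin n) (Fin n) ℕ)
    (hout : ∀ i, p ∣ ∑ j, A i j) (hin : ∀ i, p ∣ ∑ j, A j i)
    (S : PowerSeries ℤ_[p]) :
    (∀ i : ℕ, (p : ℤ_[p]) ∣ PowerSeries.coeff i (Mser p A S)) ∧
      PowerSeries.C (p : ℤ_[p]) ∣ Mser p A S := by
  have : Nonempty (Fin n) := ⟨⟨0, hn⟩⟩
  have hdvd : PowerSeries.C (p : ℤ_[p]) ∣ Mser p A S := by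
    rw [Mser_eq_det_twistedLaplacian, map_natCast]
    exact Matrix.dvd_det_of_forall_dvd_sum_row
      (Matrix.natCast_dvd_sum_twistedLaplacian_row hout hin _ _)
  refine ⟨fun i => ?_, hdvd⟩
  obtain ⟨g, hg⟩ := hdvd
  rw [hg, coeff_C_mul]
  exact dvd_mul_right _ _

/-- If `p` divides the out-degree `∑_j A_{ij}` and the in-degree `∑_j A_{ji}` of every vertex,
then every coefficient of `M(T) = det(D − (1+T)A − (1+T)⁻¹Aᵀ)` is divisible by `p`,
i.e. `M(T) ∈ p·ℤ_p[[T]]`. -/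
theorem Mser_dvd_of_p_dvd_degrees (p : ℕ) [Fact p.Prime] (n : ℕ) (hn : 1 ≤ n)
    (A : Matrix (Fin n) (Fin n) ℕ)
    (hout : ∀ i, p ∣ ∑ j, A i j) (hin : ∀ i, p ∣ ∑ j, A j i)
    (S : PowerSeries ℤ_[p]) (hS : S * (1 + PowerSeries.X) = 1) :
    (∀ i : ℕ, (p : ℤ_[p]) ∣ PowerSeries.coeff i (Mser p A S)) ∧
      PowerSeries.C (p : ℤ_[p]) ∣ Mser p A S :=
  Mser_dvd_of_p_dvd_degrees_general p n hn A hout hin S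
end
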